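/- arXiv:1409.5391 — 4 statements merged into one kernel-verified Lean document; each statement's English description precedes it below -/
import Mathlib

section
/- Let y ∈ ℝⁿ, λ ≥ 0, α ∈ [0,1], and let ‖·‖ be any norm on ℝᵐ and B ∈ ℝ^{m×n} any matrix. Let θ̂ be the unique minimizer of (1/2)‖y − θ‖₂² + αλ‖Bθ‖. Then the unique minimizer of (1/2)‖y − θ‖₂² + αλ‖Bθ‖ + (1−α)λ‖θ‖₂ is max(1 − (1−α)λ/‖θ̂‖₂, 0) · θ̂ (interpreted as 0 when θ̂ = 0). -/
open Finset

/-!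
The minimizer `θ̂` of `½‖y - θ‖² + P θ`, with `P = αλ‖B ·‖` convex, satisfies the variational
inequality `⟪y - θ̂, θ - θ̂⟫ ≤ P θ - P θ̂`; as `P` is positively homogeneous, it survives
replacing the base point `θ̂` by any `c • θ̂` with `c ≥ 0`. The soft-scaled point `m = c • θ̂` is the
proximal point of `κ‖·‖` at `θ̂`: `⟪θ̂ - m, θ - m⟫ ≤ κ‖θ‖ - κ‖m‖`. Adding the two gives the
variational inequality of the second problem at `m`, and for objectives `½‖y - θ‖² + ψ θ` that
inequality yields `G m + ½‖θ - m‖² ≤ G θ`, i.e. optimality and uniqueness at once.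
-/

open Set Filter RealInnerProductSpace

section Prox

variable {E : Type*} [NormedAddCommGroup E] [InnerProductSpace ℝ E]

noncomputable def proxObjective (ψ : E → ℝ) (y θ : E) : ℝ := 1 / 2 * ‖y - θ‖ ^ 2 + ψ θ

theorem proxObjective_add_le_of_inner_sub_le {ψ : E → ℝ} {y m : E}
    (h : ∀ θ, ⟪y - m, θ - m⟫ ≤ ψ θ - ψ m) (θ : E) :
    proxObjective ψ y m + 1 / 2 * ‖θ - m‖ ^ 2 ≤ proxObjective ψ y θ := by
  have hsq : ‖y - θ‖ ^ 2 = ‖y - m‖ ^ 2 - 2 * ⟪y - m, θ - m⟫ + ‖θ - m‖ ^ 2 := by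
    rw [← norm_sub_sq_real, sub_sub_sub_cancel_right]
  unfold proxObjective
  linarith [h θ]

theorem ConvexOn.inner_sub_le_of_proxObjective_le {ψ : E → ℝ} (hψ : ConvexOn ℝ univ ψ)
    {y m : E} (hm : ∀ θ, proxObjective ψ y m ≤ proxObjective ψ y θ) (θ : E) :
    ⟪y - m, θ - m⟫ ≤ ψ θ - ψ m := by
  have hstep : ∀ t : ℝ, t ∈ Set.Ioc 0 1 → ⟪y - m, θ - m⟫ ≤ ψ θ - ψ m + t / 2 * ‖θ - m‖ ^ 2 := by
    rintro t ⟨ht0, ht1⟩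
    have hconv := hψ.2 (mem_univ m) (mem_univ θ) (sub_nonneg.2 ht1) ht0.le (sub_add_cancel 1 t)
    have hmin := hm ((1 - t) • m + t • θ)
    have hsq : ‖y - ((1 - t) • m + t • θ)‖ ^ 2
        = ‖y - m‖ ^ 2 - 2 * t * ⟪y - m, θ - m⟫ + t ^ 2 * ‖θ - m‖ ^ 2 := by
      rw [show y - ((1 - t) • m + t • θ) = (y - m) - t • (θ - m) by module, norm_sub_sq_real,
        inner_smul_right, norm_smul, mul_pow, Real.norm_eq_abs, sq_abs]
      ring
    simp only [proxObjective, smul_eq_mul] at hmin hconv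
    have : t * ⟪y - m, θ - m⟫ ≤ t * (ψ θ - ψ m + t / 2 * ‖θ - m‖ ^ 2) := by nlinarith
    exact le_of_mul_le_mul_left this ht0
  refine ge_of_tendsto ?_ (eventually_of_mem (Ioc_mem_nhdsGT one_pos) hstep)
  have : Continuous fun t : ℝ => ψ θ - ψ m + t / 2 * ‖θ - m‖ ^ 2 := by fun_prop
  simpa using (this.tendsto 0).mono_left nhdsWithin_le_nhds

theorem inner_sub_smul_le_of_inner_sub_le {P : E → ℝ}
    (hP : ∀ t : ℝ, 0 ≤ t → ∀ x, P (t • x) = t * P x) {v m : E}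
    (h : ∀ θ, ⟪v, θ - m⟫ ≤ P θ - P m) {c : ℝ} (hc : 0 ≤ c) (θ : E) :
    ⟪v, θ - c • m⟫ ≤ P θ - P (c • m) := by
  have hP0 : P 0 = 0 := by simpa using hP 0 le_rfl 0
  have hle : ⟪v, m⟫ ≤ P m := by
    have := h ((2 : ℝ) • m)
    rw [hP 2 zero_le_two, two_smul, add_sub_cancel_right] at this
    linarith
  have hge : P m ≤ ⟪v, m⟫ := by
    have := h 0
    rw [hP0, zero_sub, inner_neg_right] at this
    linarith
  have hsplit : ⟪v, θ - c • m⟫ = ⟪v, θ - m⟫ + (1 - c) * ⟪v, m⟫ := by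
    rw [show θ - c • m = (θ - m) + (1 - c) • m by module, inner_add_right, inner_smul_right]
  rw [hsplit, hP c hc, le_antisymm hle hge]
  linarith [h θ]

noncomputable def softScale (κ : ℝ) (x : E) : E := max (1 - κ / ‖x‖) 0 • x

theorem inner_sub_softScale_le {κ : ℝ} (hκ : 0 ≤ κ) (x θ : E) :
    ⟪x - softScale κ x, θ - softScale κ x⟫ ≤ κ * ‖θ‖ - κ * ‖softScale κ x‖ := by
  rcases eq_or_ne x 0 with rfl | hx
  · simpa [softScale] using mul_nonneg hκ (norm_nonneg θ)
  have hr : 0 < ‖x‖ := norm_pos_iff.2 hx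
  have hcs : ⟪x, θ⟫ ≤ ‖x‖ * ‖θ‖ := real_inner_le_norm x θ
  rcases le_or_gt κ ‖x‖ with hκx | hκx
  · set s := κ / ‖x‖ with hs
    have hs0 : 0 ≤ s := div_nonneg hκ hr.le
    have hκs : κ = s * ‖x‖ := (div_mul_cancel₀ κ hr.ne').symm
    have h1s : 0 ≤ 1 - s := sub_nonneg.2 ((div_le_one hr).2 hκx)
    have hc : max (1 - s) 0 = 1 - s := max_eq_left h1s
    have hsub : x - (1 - s) • x = s • x := by module
    simp only [softScale, ← hs, hc, hsub, inner_smul_left, inner_sub_right, inner_smul_right,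
      real_inner_self_eq_norm_sq, norm_smul, Real.norm_of_nonneg h1s, RCLike.conj_to_real]
    rw [hκs]
    nlinarith [mul_le_mul_of_nonneg_left hcs hs0]
  · have hc : max (1 - κ / ‖x‖) 0 = 0 :=
      max_eq_right (sub_nonpos.2 ((one_le_div hr).2 hκx.le))
    simp only [softScale, hc, zero_smul, sub_zero, norm_zero, mul_zero]
    nlinarith [norm_nonneg θ]

theorem proxObjective_softScale_add_le {P : E → ℝ} (hPconv : ConvexOn ℝ univ P)
    (hPhom : ∀ t : ℝ, 0 ≤ t → ∀ x, P (t • x) = t * P x) {κ : ℝ} (hκ : 0 ≤ κ) {y x : E}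
    (hx : ∀ θ, proxObjective P y x ≤ proxObjective P y θ) (θ : E) :
    proxObjective (fun θ => P θ + κ * ‖θ‖) y (softScale κ x) + 1 / 2 * ‖θ - softScale κ x‖ ^ 2
      ≤ proxObjective (fun θ => P θ + κ * ‖θ‖) y θ := by
  refine proxObjective_add_le_of_inner_sub_le (fun θ => ?_) θ
  have hP := inner_sub_smul_le_of_inner_sub_le hPhom (hPconv.inner_sub_le_of_proxObjective_le hx)
    (le_max_right (1 - κ / ‖x‖) 0) θ
  have hnorm := inner_sub_softScale_le hκ x θ
  rw [show y - softScale κ x = (y - x) + (x - softScale κ x) by abel, inner_add_left]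
  unfold softScale at *
  linarith

end Prox

theorem EuclideanSpace.sqrt_sum_sq_eq_norm {ι : Type*} [Fintype ι] (x : ι → ℝ) :
    √(∑ i, x i ^ 2) = ‖WithLp.toLp 2 x‖ := by
  rw [← EuclideanSpace.real_norm_sq_eq, Real.sqrt_sq (norm_nonneg _)]

theorem EuclideanSpace.sum_sub_sq_eq_norm_sq {ι : Type*} [Fintype ι] (x z : ι → ℝ) :
    ∑ i, (x i - z i) ^ 2 = ‖WithLp.toLp 2 x - WithLp.toLp 2 z‖ ^ 2 := by
  rw [← WithLp.toLp_sub, EuclideanSpace.real_norm_sq_eq]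
  rfl

theorem proxObjective_toLp {ι : Type*} [Fintype ι] (ψ : EuclideanSpace ℝ ι → ℝ) (y θ : ι → ℝ) :
    proxObjective ψ (WithLp.toLp 2 y) (WithLp.toLp 2 θ)
      = 1 / 2 * ∑ i, (y i - θ i) ^ 2 + ψ (WithLp.toLp 2 θ) := by
  rw [proxObjective, EuclideanSpace.sum_sub_sq_eq_norm_sq]

theorem flam_soft_scale_general_general
    (n m : ℕ) (y : Fin n → ℝ) (lam : ℝ) (hlam : 0 ≤ lam)
    (alpha : ℝ) (halpha : alpha ∈ Set.Icc (0:ℝ) 1)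
    (N : (Fin m → ℝ) → ℝ)
    (hN_smul : ∀ (a : ℝ) (x : Fin m → ℝ), N (a • x) = |a| * N x)
    (hN_add : ∀ x z : Fin m → ℝ, N (x + z) ≤ N x + N z)
    (B : Matrix (Fin m) (Fin n) ℝ)
    (F : (Fin n → ℝ) → ℝ)
    (hF : F = fun θ => (1/2) * ∑ i, (y i - θ i)^2 + alpha * lam * N (B.mulVec θ))
    (G : (Fin n → ℝ) → ℝ)
    (hG : G = fun θ => (1/2) * ∑ i, (y i - θ i)^2 + alpha * lam * N (B.mulVec θ)
        + (1 - alpha) * lam * Real.sqrt (∑ i, (θ i)^2))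
    (θhat : Fin n → ℝ)
    (hθhat : ∀ θ, F θhat ≤ F θ) :
    (∀ θ, G ((max (1 - (1 - alpha) * lam / Real.sqrt (∑ i, (θhat i)^2)) 0) • θhat) ≤ G θ)
      ∧ ∀ θ, (∀ θ', G θ ≤ G θ') →
        θ = (max (1 - (1 - alpha) * lam / Real.sqrt (∑ i, (θhat i)^2)) 0) • θhat := by
  let q : Seminorm ℝ (EuclideanSpace ℝ (Fin n)) :=
    (Seminorm.of N hN_add fun a x => by rw [hN_smul, Real.norm_eq_abs]).comp
      (B.mulVecLin ∘ₗ (WithLp.linearEquiv 2 ℝ (Fin n → ℝ)).toLinearMap)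
  let P u := alpha * lam * q u
  have hPconv : ConvexOn ℝ univ P := q.convexOn.smul (mul_nonneg halpha.1 hlam)
  have hPhom : ∀ t : ℝ, 0 ≤ t → ∀ x, P (t • x) = t * P x := fun t ht x => by
    simp only [P, map_smul_eq_mul, Real.norm_of_nonneg ht]
    ring
  set κ := (1 - alpha) * lam
  have hκ : 0 ≤ κ := mul_nonneg (sub_nonneg.2 halpha.2) hlam
  set xhat := WithLp.toLp 2 θhat
  set m := softScale κ xhat
  have hF' θ : F θ = proxObjective P (WithLp.toLp 2 y) (WithLp.toLp 2 θ) := by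
    rw [hF, proxObjective_toLp]; rfl
  have hG' θ :
      G θ = proxObjective (fun u => P u + κ * ‖u‖) (WithLp.toLp 2 y) (WithLp.toLp 2 θ) := by
    rw [hG, proxObjective_toLp, ← EuclideanSpace.sqrt_sum_sq_eq_norm]
    exact add_assoc _ _ _
  have hsoft : max (1 - κ / √(∑ i, θhat i ^ 2)) 0 • θhat = WithLp.ofLp m := by
    rw [EuclideanSpace.sqrt_sum_sq_eq_norm]; rfl
  have key := proxObjective_softScale_add_le hPconv hPhom hκ (y := WithLp.toLp 2 y)
    (fun u => by simpa only [hF', WithLp.toLp_ofLp] using hθhat (WithLp.ofLp u))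
  rw [hsoft]
  refine ⟨fun θ => ?_, fun θ hθ => ?_⟩
  · rw [hG', hG', WithLp.toLp_ofLp]
    linarith [key (WithLp.toLp 2 θ), sq_nonneg ‖WithLp.toLp 2 θ - m‖]
  · have hle := hθ (WithLp.ofLp m)
    rw [hG', hG', WithLp.toLp_ofLp] at hle
    have hdist : ‖WithLp.toLp 2 θ - m‖ ^ 2 ≤ 0 := by linarith [key (WithLp.toLp 2 θ)]
    rw [sq_nonpos_iff, norm_eq_zero, sub_eq_zero] at hdist
    rw [← hdist]

/-- soft-scaling solution of the doubly-penalized problem from the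
singly-penalized one, for an arbitrary norm `N` on `ℝᵐ` and matrix `B`. -/
theorem flam_soft_scale_general
    (n m : ℕ) (y : Fin n → ℝ) (lam : ℝ) (hlam : 0 ≤ lam)
    (alpha : ℝ) (halpha : alpha ∈ Set.Icc (0:ℝ) 1)
    (N : (Fin m → ℝ) → ℝ)
    (hN_smul : ∀ (a : ℝ) (x : Fin m → ℝ), N (a • x) = |a| * N x)
    (hN_add : ∀ x z : Fin m → ℝ, N (x + z) ≤ N x + N z)
    (hN_eq_zero : ∀ x : Fin m → ℝ, N x = 0 → x = 0)
    (B : Matrix (Fin m) (Fin n) ℝ)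
    (F : (Fin n → ℝ) → ℝ)
    (hF : F = fun θ => (1/2) * ∑ i, (y i - θ i)^2 + alpha * lam * N (B.mulVec θ))
    (G : (Fin n → ℝ) → ℝ)
    (hG : G = fun θ => (1/2) * ∑ i, (y i - θ i)^2 + alpha * lam * N (B.mulVec θ)
        + (1 - alpha) * lam * Real.sqrt (∑ i, (θ i)^2))
    (θhat : Fin n → ℝ)
    (hθhat : ∀ θ, F θhat ≤ F θ) :
    (∀ θ, G ((max (1 - (1 - alpha) * lam / Real.sqrt (∑ i, (θhat i)^2)) 0) • θhat) ≤ G θ)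
      ∧ ∀ θ, (∀ θ', G θ ≤ G θ') →
        θ = (max (1 - (1 - alpha) * lam / Real.sqrt (∑ i, (θhat i)^2)) 0) • θhat :=
  flam_soft_scale_general_general n m y lam hlam alpha halpha N hN_smul hN_add B F hF G hG θhat
    hθhat
end

section
/- Let y ∈ ℝⁿ, λ ≥ 0, α ∈ [0,1], and let D ∈ ℝ^{(n−1)×n} be the discrete first-difference matrix with D_{i,i} = 1, D_{i,i+1} = −1 and zeros elsewhere. Let θ̂ minimize (1/2)‖y − θ‖₂² + αλ‖Dθ‖₁. Then max(1 − (1−α)λ/‖θ̂‖₂, 0) · θ̂ minimizes (1/2)‖y − θ‖₂² + αλ‖Dθ‖₁ + (1−α)λ‖θ‖₂. -/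
/-!
If `θ̂` minimizes `½‖y - θ‖² + p θ` for a seminorm `p`, first-order optimality together with the
homogeneity of `p` gives `⟪y - θ̂, θ̂⟫ = p θ̂` and `⟪y - θ̂, θ⟫ ≤ p θ` for every `θ`. Expanding
`½‖y - θ‖²` around `c • θ̂` and applying Cauchy–Schwarz, the excess of the objective with the extra
penalty `μ‖θ‖` at `θ` over its value at `c • θ̂` is at least `(‖θ‖ - c‖θ̂‖)(μ - (1 - c)‖θ̂‖)`, and the
choice `c = (1 - μ/‖θ̂‖)₊` makes this product nonnegative: either `(1 - c)‖θ̂‖ = μ`, or `c‖θ̂‖ = 0`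
and `‖θ̂‖ ≤ μ`.
-/

open Finset

/-- The discrete first-difference matrix `D ∈ ℝ^{(n-1)×n}`:
`D i i = 1`, `D i (i+1) = -1`, zeros elsewhere. -/
def diffMatrix (n : ℕ) : Matrix (Fin (n-1)) (Fin n) ℝ :=
  fun i j => if (j : ℕ) = (i : ℕ) then 1 else if (j : ℕ) = (i : ℕ) + 1 then -1 else 0

open Filter Topology RealInnerProductSpace

theorem le_of_forall_le_add_mul {a b K : ℝ} (h : ∀ t, 0 < t → t ≤ 1 → a ≤ b + t * K) :
    a ≤ b := by
  have hlim : Tendsto (fun t => b + t * K) (𝓝[>] 0) (𝓝 b) := by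
    have : Continuous fun t : ℝ => b + t * K := by fun_prop
    simpa using (this.tendsto 0).mono_left nhdsWithin_le_nhds
  refine ge_of_tendsto hlim ?_
  filter_upwards [Ioo_mem_nhdsGT one_pos] with t ht using h t ht.1 ht.2.le

theorem softScale_mul_nonneg {r μ N : ℝ} (hr : 0 ≤ r) (hμ : 0 ≤ μ) (hN : 0 ≤ N) :
    0 ≤ (N - max (1 - μ / r) 0 * r) * (μ - (1 - max (1 - μ / r) 0) * r) := by
  rcases le_or_gt r μ with hrμ | hμr
  · have hcr : max (1 - μ / r) 0 * r = 0 := by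
      rcases hr.eq_or_lt with rfl | hr0
      · exact mul_zero _
      · rw [max_eq_right (by rw [sub_nonpos, one_le_div hr0]; exact hrμ), zero_mul]
    rw [hcr, one_sub_mul, hcr, sub_zero, sub_zero]
    exact mul_nonneg hN (sub_nonneg.2 hrμ)
  · have hr0 : 0 < r := hμ.trans_lt hμr
    rw [max_eq_left (by rw [sub_nonneg, div_le_one hr0]; exact hμr.le)]
    field_simp
    simp

theorem Seminorm.map_add_smul_sub_le {E : Type*} [AddCommGroup E] [Module ℝ E] (p : Seminorm ℝ E)
    (x z : E) {t : ℝ} (ht0 : 0 ≤ t) (ht1 : t ≤ 1) :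
    p (x + t • (z - x)) ≤ (1 - t) * p x + t * p z := by
  calc p (x + t • (z - x)) = p ((1 - t) • x + t • z) := by congr 1; module
    _ ≤ p ((1 - t) • x) + p (t • z) := map_add_le_add p _ _
    _ = (1 - t) * p x + t * p z := by
      rw [map_smul_eq_mul, map_smul_eq_mul, Real.norm_of_nonneg ht0,
        Real.norm_of_nonneg (sub_nonneg.2 ht1)]

section ProxSeminorm

variable {E : Type*} [NormedAddCommGroup E] [InnerProductSpace ℝ E] {p : Seminorm ℝ E} {y x : E}

theorem inner_sub_le_sub_of_isMinOn_prox (hx : IsMinOn (fun z => ‖y - z‖ ^ 2 / 2 + p z) Set.univ x)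
    (z : E) : ⟪y - x, z - x⟫ ≤ p z - p x := by
  refine le_of_forall_le_add_mul (K := ‖z - x‖ ^ 2 / 2) fun t ht0 ht1 => ?_
  have hmin := isMinOn_univ_iff.1 hx (x + t • (z - x))
  have hexp : ‖y - (x + t • (z - x))‖ ^ 2
      = ‖y - x‖ ^ 2 - 2 * t * ⟪y - x, z - x⟫ + t ^ 2 * ‖z - x‖ ^ 2 := by
    rw [show y - (x + t • (z - x)) = (y - x) - t • (z - x) by abel, norm_sub_sq_real,
      inner_smul_right, norm_smul, mul_pow, Real.norm_eq_abs, sq_abs]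
    ring
  have hconv := p.map_add_smul_sub_le x z ht0.le ht1
  simp only [hexp] at hmin
  refine le_of_mul_le_mul_left ?_ ht0
  nlinarith

theorem inner_sub_self_eq_of_isMinOn_prox
    (hx : IsMinOn (fun z => ‖y - z‖ ^ 2 / 2 + p z) Set.univ x) : ⟪y - x, x⟫ = p x := by
  have hup := inner_sub_le_sub_of_isMinOn_prox hx ((2 : ℝ) • x)
  have hdown := inner_sub_le_sub_of_isMinOn_prox hx 0
  rw [map_smul_eq_mul, Real.norm_two, show (2 : ℝ) • x - x = x by module] at hup
  rw [zero_sub, inner_neg_right, map_zero] at hdown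
  linarith

theorem inner_sub_le_of_isMinOn_prox
    (hx : IsMinOn (fun z => ‖y - z‖ ^ 2 / 2 + p z) Set.univ x) (z : E) : ⟪y - x, z⟫ ≤ p z := by
  have h := inner_sub_le_sub_of_isMinOn_prox hx z
  rw [inner_sub_right, inner_sub_self_eq_of_isMinOn_prox hx] at h
  linarith

theorem isMinOn_prox_add_smul_norm (hx : IsMinOn (fun z => ‖y - z‖ ^ 2 / 2 + p z) Set.univ x)
    {μ : ℝ} (hμ : 0 ≤ μ) :
    IsMinOn (fun z => ‖y - z‖ ^ 2 / 2 + p z + μ * ‖z‖) Set.univ (max (1 - μ / ‖x‖) 0 • x) := by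
  set c := max (1 - μ / ‖x‖) 0
  have hc0 : 0 ≤ c := le_max_right _ _
  have hc1 : c ≤ 1 := max_le (by linarith [div_nonneg hμ (norm_nonneg x)]) zero_le_one
  refine isMinOn_univ_iff.2 fun z => ?_
  have hexp : ‖y - z‖ ^ 2 = ‖y - c • x‖ ^ 2 + 2 * ⟪y - c • x, c • x - z⟫ + ‖c • x - z‖ ^ 2 := by
    rw [← norm_add_sq_real, sub_add_sub_cancel]
  have hcross : ⟪y - c • x, c • x - z⟫
      = c * p x - ⟪y - x, z⟫ + (1 - c) * c * ‖x‖ ^ 2 - (1 - c) * ⟪x, z⟫ := by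
    rw [show y - c • x = (y - x) + (1 - c) • x by module, inner_add_left, inner_sub_right,
      inner_sub_right, inner_smul_right, inner_smul_left, inner_smul_left, inner_smul_right,
      inner_sub_self_eq_of_isMinOn_prox hx, real_inner_self_eq_norm_sq]
    simp only [RCLike.conj_to_real]
    ring
  have hpz := inner_sub_le_of_isMinOn_prox hx z
  have hCS : (1 - c) * ⟪x, z⟫ ≤ (1 - c) * (‖x‖ * ‖z‖) :=
    mul_le_mul_of_nonneg_left (real_inner_le_norm x z) (sub_nonneg.2 hc1)
  have hprod : 0 ≤ (‖z‖ - c * ‖x‖) * (μ - (1 - c) * ‖x‖) :=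
    softScale_mul_nonneg (norm_nonneg x) hμ (norm_nonneg z)
  simp only [map_smul_eq_mul, norm_smul, Real.norm_of_nonneg hc0]
  nlinarith [sq_nonneg ‖c • x - z‖]

end ProxSeminorm

def Matrix.l1SeminormMulVec {m ι : Type*} [Fintype m] [Fintype ι] (A : Matrix m ι ℝ) :
    Seminorm ℝ (EuclideanSpace ℝ ι) :=
  Seminorm.of (fun x => ∑ i, |A.mulVec x.ofLp i|)
    (fun x z => by
      simp only [WithLp.ofLp_add, Matrix.mulVec_add, Pi.add_apply, ← sum_add_distrib]
      exact sum_le_sum fun i _ => abs_add_le _ _)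
    (fun a x => by
      simp only [WithLp.ofLp_smul, Matrix.mulVec_smul, Pi.smul_apply, smul_eq_mul, abs_mul,
        Real.norm_eq_abs, mul_sum])

theorem Matrix.l1SeminormMulVec_toLp {m ι : Type*} [Fintype m] [Fintype ι] (A : Matrix m ι ℝ)
    (θ : ι → ℝ) : A.l1SeminormMulVec (WithLp.toLp 2 θ) = ∑ i, |A.mulVec θ i| := rfl

theorem EuclideanSpace.norm_toLp {ι : Type*} [Fintype ι] (θ : ι → ℝ) :
    ‖WithLp.toLp 2 θ‖ = √(∑ i, θ i ^ 2) := by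
  simp [EuclideanSpace.norm_eq]

/-- soft-scaling for the fused lasso penalty. -/
theorem flam_soft_scale_fused
    (n : ℕ) (y : Fin n → ℝ) (lam : ℝ) (hlam : 0 ≤ lam)
    (alpha : ℝ) (halpha : alpha ∈ Set.Icc (0:ℝ) 1)
    (F : (Fin n → ℝ) → ℝ)
    (hF : F = fun θ => (1/2) * ∑ i, (y i - θ i)^2
        + alpha * lam * ∑ i, |((diffMatrix n).mulVec θ) i|)
    (G : (Fin n → ℝ) → ℝ)
    (hG : G = fun θ => (1/2) * ∑ i, (y i - θ i)^2
        + alpha * lam * ∑ i, |((diffMatrix n).mulVec θ) i|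
        + (1 - alpha) * lam * Real.sqrt (∑ i, (θ i)^2))
    (θhat : Fin n → ℝ)
    (hθhat : ∀ θ, F θhat ≤ F θ) :
    ∀ θ, G ((max (1 - (1 - alpha) * lam / Real.sqrt (∑ i, (θhat i)^2)) 0) • θhat) ≤ G θ := by
  subst hF hG
  obtain ⟨ha0, ha1⟩ := halpha
  set p := (alpha * lam).toNNReal • (diffMatrix n).l1SeminormMulVec
  have hobj (θ : Fin n → ℝ) : ‖WithLp.toLp 2 y - WithLp.toLp 2 θ‖ ^ 2 / 2 + p (WithLp.toLp 2 θ)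
      = (1/2) * ∑ i, (y i - θ i)^2 + alpha * lam * ∑ i, |((diffMatrix n).mulVec θ) i| := by
    rw [← WithLp.toLp_sub, EuclideanSpace.norm_toLp, Real.sq_sqrt (by positivity), smul_apply,
      Matrix.l1SeminormMulVec_toLp, NNReal.smul_def, Real.coe_toNNReal _ (mul_nonneg ha0 hlam),
      smul_eq_mul]
    simp only [Pi.sub_apply]
    ring
  have hmin :
      IsMinOn (fun z => ‖WithLp.toLp 2 y - z‖ ^ 2 / 2 + p z) Set.univ (WithLp.toLp 2 θhat) :=
    isMinOn_univ_iff.2 fun z => by rw [hobj, ← WithLp.toLp_ofLp 2 z, hobj]; exact hθhat _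
  intro θ
  have h := isMinOn_univ_iff.1
    (isMinOn_prox_add_smul_norm hmin (mul_nonneg (sub_nonneg.2 ha1) hlam)) (WithLp.toLp 2 θ)
  rw [← WithLp.toLp_smul] at h
  simp only [hobj, EuclideanSpace.norm_toLp] at h
  exact h
end

section
/- Chi-squared upper tail bound: if X follows a chi-squared distribution with n degrees of freedom, then for all x ≥ 0, P(X ≥ n + 2√(nx) + 2x) ≤ e^{−x}. -/
open MeasureTheory ProbabilityTheory Finset Real

/-! Chernoff's bound: `E exp(t Zᵢ²) = (1 - 2t)^(-1/2)` for `t < 1/2`, so by independence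
`P(X ≥ a) ≤ exp(-t a) (1 - 2t)^(-n/2)`. At the optimal `t = (1 - n/a)/2` with
`a = n + 2√(nx) + 2x` and `s = √(x/n)`, this equals `exp(-ns - x) ((a/n)^(1/2))^n`, and
`a/n = 1 + 2s + 2s² ≤ exp(2s)` turns it into `exp(-x)`. -/

-- For `t ≥ 1/2` both sides are junk zeros: `x ↦ exp (t x²)` is not integrable and `√` of a
-- nonpositive number is `0`.
lemma mgf_sq_gaussianReal (t : ℝ) :
    mgf (fun x => x ^ 2) (gaussianReal 0 1) t = (√(1 - 2 * t))⁻¹ := by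
  have hdensity : ∀ x : ℝ, gaussianPDFReal 0 1 x • exp (t * x ^ 2)
      = (√(2 * π))⁻¹ * exp (-(1 / 2 - t) * x ^ 2) := fun x => by
    rw [gaussianPDFReal, smul_eq_mul, mul_assoc, ← exp_add]
    push_cast
    ring_nf
  rw [mgf, integral_gaussianReal_eq_integral_smul one_ne_zero]
  simp_rw [hdensity]
  rw [integral_const_mul, integral_gaussian, ← sqrt_inv, ← sqrt_mul (by positivity), ← sqrt_inv]
  congr 1
  field_simp

section

variable {Ω ι : Type*} [MeasurableSpace Ω] {P : Measure Ω} [Fintype ι] {Z : ι → Ω → ℝ}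

lemma mgf_sum_sq_of_iIndepFun (hindep : iIndepFun Z P)
    (hgauss : ∀ i, P.map (Z i) = gaussianReal 0 1) (t : ℝ) :
    mgf (fun ω => ∑ i, Z i ω ^ 2) P t = (√(1 - 2 * t))⁻¹ ^ Fintype.card ι := by
  have hmeas : ∀ i, AEMeasurable (Z i) P := fun i =>
    .of_map_ne_zero (by rw [hgauss i]; exact IsProbabilityMeasure.ne_zero _)
  have hsq : ∀ i, mgf (fun ω => Z i ω ^ 2) P t = (√(1 - 2 * t))⁻¹ := fun i => by
    rw [← mgf_sq_gaussianReal t, ← hgauss i, mgf_map (hmeas i) (by fun_prop)]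
    rfl
  have hindep_sq : iIndepFun (fun i ω => Z i ω ^ 2) P :=
    hindep.comp (fun _ x => x ^ 2) (fun _ => by fun_prop)
  have hsum := hindep_sq.mgf_sum₀ (t := t) (fun i => (hmeas i).pow_const 2) univ
  rw [Finset.sum_fn] at hsum
  simp [hsum, hsq]

lemma measureReal_sum_sq_ge_le_exp_mul (hindep : iIndepFun Z P)
    (hgauss : ∀ i, P.map (Z i) = gaussianReal 0 1) {t : ℝ} (ht₀ : 0 ≤ t) (ht : t < 1 / 2)
    (a : ℝ) :
    P.real {ω | a ≤ ∑ i, Z i ω ^ 2} ≤ exp (-t * a) * (√(1 - 2 * t))⁻¹ ^ Fintype.card ι := by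
  have := hindep.isProbabilityMeasure
  have hmgf := mgf_sum_sq_of_iIndepFun hindep hgauss t
  have hmgf_pos : 0 < mgf (fun ω => ∑ i, Z i ω ^ 2) P t := by
    have : 0 < 1 - 2 * t := by linarith
    rw [hmgf]
    positivity
  -- a nonzero integral has an integrable integrand
  have hint : Integrable (fun ω => exp (t * ∑ i, Z i ω ^ 2)) P :=
    .of_integral_ne_zero hmgf_pos.ne'
  rw [← hmgf]
  exact measure_ge_le_exp_mul_mgf a ht₀ hint

end

lemma exp_neg_mul_mul_inv_sqrt_pow_le {n : ℕ} (hn : 0 < n) {x a t : ℝ} (hx : 0 ≤ x)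
    (ha : a = n + 2 * √(n * x) + 2 * x) (ht : t = (1 - n / a) / 2) :
    exp (-t * a) * (√(1 - 2 * t))⁻¹ ^ n ≤ exp (-x) := by
  have hn₀ : (n : ℝ) ≠ 0 := by positivity
  have ha₀ : a ≠ 0 := by rw [ha]; positivity
  obtain ⟨s, hs₀, hsqrt⟩ : ∃ s : ℝ, 0 ≤ s ∧ √(n * x) = n * s :=
    ⟨√(n * x) / n, by positivity, by field_simp⟩
  have hx_eq : x = n * s ^ 2 := by
    have := sq_sqrt (by positivity : (0 : ℝ) ≤ n * x)
    rw [hsqrt] at this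
    field_simp at this
    linarith
  have hta : t * a = n * s + x := by
    rw [ht, ha, hsqrt]; field_simp; ring
  have hinv : (√(1 - 2 * t))⁻¹ = √(a / n) := by
    rw [ht, show 1 - 2 * ((1 - n / a) / 2) = (n : ℝ) / a by ring, ← sqrt_inv, inv_div]
  have hquad : a / n ≤ exp s ^ 2 :=
    calc a / n = 1 + 2 * s + (2 * s) ^ 2 / 2 := by rw [ha, hsqrt, hx_eq]; field_simp
      _ ≤ exp (2 * s) := quadratic_le_exp_of_nonneg (by positivity)
      _ = exp s ^ 2 := by rw [← exp_nat_mul]; norm_num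
  have hroot : √(a / n) ^ n ≤ exp (n * s) := by
    rw [exp_nat_mul]
    gcongr
    exact (sqrt_le_left (by positivity)).mpr hquad
  calc exp (-t * a) * (√(1 - 2 * t))⁻¹ ^ n
      ≤ exp (-t * a) * exp (n * s) := by rw [hinv]; gcongr
    _ = exp (-x) := by rw [← exp_add, neg_mul, hta]; ring_nf

theorem chi_squared_tail_bound_general
    {Ω : Type*} [MeasurableSpace Ω] (P : Measure Ω)
    (n : ℕ) (Z : Fin n → Ω → ℝ)
    (hindep : iIndepFun Z P)
    (hgauss : ∀ i : Fin n, Measure.map (Z i) P = gaussianReal 0 1)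
    (X : Ω → ℝ) (hX : X = fun ω => ∑ i, (Z i ω)^2) :
    ∀ x : ℝ, 0 ≤ x →
      P {ω | (n : ℝ) + 2 * Real.sqrt (n * x) + 2 * x ≤ X ω}
        ≤ ENNReal.ofReal (Real.exp (-x)) := by
  have := hindep.isProbabilityMeasure
  intro x hx
  subst hX
  rcases n.eq_zero_or_pos with rfl | hn
  · rcases hx.eq_or_lt with rfl | hx₀
    · simp
    · simp [show ¬ 2 * x ≤ 0 by linarith]
  set a : ℝ := n + 2 * √(n * x) + 2 * x with ha
  have ha₀ : 0 < a := by positivity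
  set t : ℝ := (1 - n / a) / 2 with ht
  have ht₀ : 0 ≤ t := by
    have : (n : ℝ) / a ≤ 1 := (div_le_one ha₀).mpr (by linarith [sqrt_nonneg (n * x)])
    linarith
  have ht_lt : t < 1 / 2 := by
    have : (0 : ℝ) < n / a := by positivity
    linarith
  rw [← ofReal_measureReal]
  gcongr
  calc P.real {ω | a ≤ ∑ i, Z i ω ^ 2}
      ≤ exp (-t * a) * (√(1 - 2 * t))⁻¹ ^ n := by
        simpa using measureReal_sum_sq_ge_le_exp_mul hindep hgauss ht₀ ht_lt a
    _ ≤ exp (-x) := exp_neg_mul_mul_inv_sqrt_pow_le hn hx ha ht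

/-- Laurent–Massart: if `X = ∑ᵢ Zᵢ²` with `Z₁,…,Zₙ` i.i.d.
standard Gaussians (so `X ∼ χ²_n`), then for all `x ≥ 0`,
`P(X ≥ n + 2√(nx) + 2x) ≤ e^{-x}`. -/
theorem chi_squared_tail_bound
    {Ω : Type*} [MeasurableSpace Ω] (P : Measure Ω) [IsProbabilityMeasure P]
    (n : ℕ) (Z : Fin n → Ω → ℝ)
    (hindep : iIndepFun Z P)
    (hgauss : ∀ i : Fin n, Measure.map (Z i) P = gaussianReal 0 1)
    (X : Ω → ℝ) (hX : X = fun ω => ∑ i, (Z i ω)^2) :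
    ∀ x : ℝ, 0 ≤ x →
      P {ω | (n : ℝ) + 2 * Real.sqrt (n * x) + 2 * x ≤ X ω}
        ≤ ENNReal.ofReal (Real.exp (-x)) :=
  chi_squared_tail_bound_general P n Z hindep hgauss X hX
end

section
/- Dual of the generalized fused-lasso problem: for y ∈ ℝⁿ, B ∈ ℝ^{m×n}, a norm ‖·‖ on ℝᵐ with dual norm ‖·‖_*, and μ ≥ 0, the minimizer θ̂ of (1/2)‖y − θ‖₂² + μ‖Bθ‖ satisfies θ̂ = y − Bᵀv̂, where v̂ ∈ argmin_{‖v‖_* ≤ μ} ‖y − Bᵀv‖₂². -/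
/-!
Put `θ₀ = y - Bᵀ v̂`. In finite dimension the sublevel set `{N ≤ 1}` is bounded, so `N* v ≤ μ`
just says `⟪v, z⟫ ≤ μ N z` for all `z`. For such `v`,
`½‖y - θ‖² + μ N(Bθ) ≥ ½‖y - θ‖² + ⟪Bᵀ v, θ⟫`, and for `v = v̂` the right side is
`½‖y - θ₀‖² + ⟪v̂, Bθ₀⟫ + ½‖θ - θ₀‖²`. So `θ₀` is the unique primal minimizer once
`⟪v̂, Bθ₀⟫ = μ N(Bθ₀)`. For that, Hahn–Banach gives a feasible `v₀` with `⟪v₀, Bθ₀⟫ = μ N(Bθ₀)`,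
and since `Bᵀ v̂` is the projection of `y` onto the convex set `Bᵀ {N* ≤ μ}`,
`⟪v₀ - v̂, Bθ₀⟫ = ⟪Bᵀ v₀ - Bᵀ v̂, y - Bᵀ v̂⟫ ≤ 0`.
-/

open Matrix Filter Topology

namespace Seminorm

variable {E : Type*} [AddCommGroup E] [Module ℝ E]

theorem exists_dual_le_and_eq (p : Seminorm ℝ E) (x : E) :
    ∃ g : Module.Dual ℝ E, (∀ z, g z ≤ p z) ∧ g x = p x := by
  -- make `p` the norm of `E`, so that the normed-space Hahn–Banach theorem applies
  let : Norm E := ⟨p⟩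
  let : SeminormedAddCommGroup E :=
    .ofCore (𝕜 := ℝ) ⟨apply_nonneg p, map_smul_eq_mul p, map_add_le_add p⟩
  let : NormedSpace ℝ E := ⟨fun a z => (map_smul_eq_mul p a z).le⟩
  obtain ⟨g, hg, hgx⟩ := exists_dual_vector'' ℝ x
  refine ⟨g.toLinearMap, fun z => ?_, hgx⟩
  calc g z ≤ ‖g z‖ := Real.le_norm_self _
    _ ≤ ‖g‖ * ‖z‖ := g.le_opNorm z
    _ ≤ p z := mul_le_of_le_one_left (apply_nonneg p z) hg

theorem bddAbove_image_setOf_le_one [FiniteDimensional ℝ E] (p : Seminorm ℝ E)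
    (hp : ∀ x, p x = 0 → x = 0) (f : Module.Dual ℝ E) : BddAbove (f '' {z | p z ≤ 1}) := by
  let : Norm E := ⟨p⟩
  let : NormedAddCommGroup E :=
    .ofCore (𝕜 := ℝ) ⟨⟨apply_nonneg p, map_smul_eq_mul p, map_add_le_add p⟩,
      fun x => ⟨hp x, fun h => h ▸ map_zero p⟩⟩
  let : NormedSpace ℝ E := ⟨fun a z => (map_smul_eq_mul p a z).le⟩
  let g : E →L[ℝ] ℝ := LinearMap.toContinuousLinearMap f
  refine ⟨‖g‖, ?_⟩
  rintro _ ⟨z, hz, rfl⟩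
  calc f z ≤ ‖g z‖ := Real.le_norm_self _
    _ ≤ ‖g‖ * ‖z‖ := g.le_opNorm z
    _ ≤ ‖g‖ := mul_le_of_le_one_right (norm_nonneg g) hz

theorem sSup_image_setOf_le_one_le_iff [FiniteDimensional ℝ E] (p : Seminorm ℝ E)
    (hp : ∀ x, p x = 0 → x = 0) (f : Module.Dual ℝ E) {μ : ℝ} (hμ : 0 ≤ μ) :
    sSup (f '' {z | p z ≤ 1}) ≤ μ ↔ ∀ z, f z ≤ μ * p z := by
  refine ⟨fun h z => ?_, fun h => ?_⟩
  · rcases (apply_nonneg p z).eq_or_lt with hz | hz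
    · simp [hp z hz.symm]
    · have hz₁ : p ((p z)⁻¹ • z) ≤ 1 := by
        rw [map_smul_eq_mul, Real.norm_of_nonneg (inv_nonneg.2 hz.le), inv_mul_cancel₀ hz.ne']
      have := (le_csSup (p.bddAbove_image_setOf_le_one hp f) ⟨_, hz₁, rfl⟩).trans h
      rwa [map_smul, smul_eq_mul, inv_mul_le_iff₀ hz, mul_comm] at this
  · refine csSup_le ⟨0, 0, by simp, map_zero f⟩ ?_
    rintro _ ⟨z, hz, rfl⟩
    exact (h z).trans (mul_le_of_le_one_right hμ hz)

end Seminorm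

theorem nonpos_of_forall_le_mul {A q : ℝ} (h : ∀ t, 0 < t → t ≤ 1 → A ≤ t * q) : A ≤ 0 := by
  have hlim : Tendsto (fun t => t * q) (𝓝[>] 0) (𝓝 0) := by
    simpa using (continuous_mul_const q).continuousWithinAt.tendsto (x := (0 : ℝ)) (s := Set.Ioi 0)
  refine ge_of_tendsto hlim ?_
  filter_upwards [Ioc_mem_nhdsGT one_pos] with t ht using h t ht.1 ht.2

variable {ι κ : Type*} [Fintype ι] [Fintype κ]

theorem sum_sub_sq_eq_dotProduct (x z : ι → ℝ) : ∑ i, (x i - z i) ^ 2 = (x - z) ⬝ᵥ (x - z) := by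
  simp [dotProduct, sq]

theorem IsMinOn.dotProduct_sub_le_zero {K : Set (ι → ℝ)} (hK : Convex ℝ K) {a u w : ι → ℝ}
    (hmin : IsMinOn (fun x => (a - x) ⬝ᵥ (a - x)) K u) (hu : u ∈ K) (hw : w ∈ K) :
    (a - u) ⬝ᵥ (w - u) ≤ 0 := by
  suffices h : ∀ t, 0 < t → t ≤ 1 → 2 * ((a - u) ⬝ᵥ (w - u)) ≤ t * ((w - u) ⬝ᵥ (w - u)) by
    linarith [nonpos_of_forall_le_mul h]
  intro t ht₀ ht₁
  have hmin_t := isMinOn_iff.1 hmin _ (hK.add_smul_sub_mem hu hw ⟨ht₀.le, ht₁⟩)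
  simp only [← sub_sub] at hmin_t
  generalize a - u = r, w - u = d at hmin_t ⊢
  simp only [sub_dotProduct, dotProduct_sub, smul_dotProduct, dotProduct_smul, smul_eq_mul,
    dotProduct_comm d r] at hmin_t
  nlinarith

theorem IsMinOn.dotProduct_mulVec_eq (B : Matrix κ ι ℝ) (y : ι → ℝ) {μ : ℝ} (hμ : 0 ≤ μ)
    (p : Seminorm ℝ (κ → ℝ)) {v : κ → ℝ} (hv : ∀ z, v ⬝ᵥ z ≤ μ * p z)
    (hmin : IsMinOn (fun v' => (y - Bᵀ *ᵥ v') ⬝ᵥ (y - Bᵀ *ᵥ v'))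
      {v' | ∀ z, v' ⬝ᵥ z ≤ μ * p z} v) :
    v ⬝ᵥ (B *ᵥ (y - Bᵀ *ᵥ v)) = μ * p (B *ᵥ (y - Bᵀ *ᵥ v)) := by
  classical
  set w := B *ᵥ (y - Bᵀ *ᵥ v)
  obtain ⟨g, hg_le, hg_w⟩ := p.exists_dual_le_and_eq w
  set v₀ := μ • (dotProductEquiv ℝ κ).symm g
  have hv₀ (z : κ → ℝ) : v₀ ⬝ᵥ z = μ * g z := by
    rw [smul_dotProduct, ← dotProductEquiv_apply_apply, LinearEquiv.apply_symm_apply, smul_eq_mul]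
  have hv₀_feas (z : κ → ℝ) : v₀ ⬝ᵥ z ≤ μ * p z := hv₀ z ▸ mul_le_mul_of_nonneg_left (hg_le z) hμ
  have hK : Convex ℝ {v' : κ → ℝ | ∀ z, v' ⬝ᵥ z ≤ μ * p z} := by
    simp_rw [Set.ofPred_forall]
    exact convex_iInter fun z => convex_halfSpace_le ((dotProductBilin ℝ ℝ).flip z).isLinear _
  have hproj : IsMinOn (fun x => (y - x) ⬝ᵥ (y - x)) (Bᵀ.mulVecLin '' {v' | ∀ z, v' ⬝ᵥ z ≤ μ * p z})
      (Bᵀ *ᵥ v) := by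
    rintro _ ⟨v', hv', rfl⟩
    exact hmin hv'
  have hvar := hproj.dotProduct_sub_le_zero (hK.linear_image Bᵀ.mulVecLin)
    ⟨v, hv, rfl⟩ ⟨v₀, hv₀_feas, rfl⟩
  simp only [mulVecLin_apply, ← mulVec_sub, dotProduct_mulVec, vecMul_transpose] at hvar
  change w ⬝ᵥ (v₀ - v) ≤ 0 at hvar
  rw [dotProduct_sub, dotProduct_comm w, dotProduct_comm w, hv₀, hg_w] at hvar
  exact le_antisymm (hv w) (by linarith)

theorem add_half_dotProduct_le_of_dual_certificate (B : Matrix κ ι ℝ) {y θ₀ : ι → ℝ} {μ : ℝ}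
    {N : (κ → ℝ) → ℝ} {v : κ → ℝ} (hv : ∀ z, v ⬝ᵥ z ≤ μ * N z) (hθ₀ : θ₀ = y - Bᵀ *ᵥ v)
    (hslack : v ⬝ᵥ (B *ᵥ θ₀) = μ * N (B *ᵥ θ₀)) (θ : ι → ℝ) :
    (1 / 2) * ((y - θ₀) ⬝ᵥ (y - θ₀)) + μ * N (B *ᵥ θ₀) + (1 / 2) * ((θ - θ₀) ⬝ᵥ (θ - θ₀))
      ≤ (1 / 2) * ((y - θ) ⬝ᵥ (y - θ)) + μ * N (B *ᵥ θ) := by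
  have h := hv (B *ᵥ θ)
  rw [← hslack]
  rw [dotProduct_mulVec, ← mulVec_transpose] at h ⊢
  subst hθ₀
  have hsquare : (1 / 2) * ((y - (y - Bᵀ *ᵥ v)) ⬝ᵥ (y - (y - Bᵀ *ᵥ v)))
      + (Bᵀ *ᵥ v) ⬝ᵥ (y - Bᵀ *ᵥ v) + (1 / 2) * ((θ - (y - Bᵀ *ᵥ v)) ⬝ᵥ (θ - (y - Bᵀ *ᵥ v)))
      = (1 / 2) * ((y - θ) ⬝ᵥ (y - θ)) + (Bᵀ *ᵥ v) ⬝ᵥ θ := by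
    generalize Bᵀ *ᵥ v = u
    simp only [dotProduct, Pi.sub_apply, Finset.mul_sum, ← Finset.sum_add_distrib]
    exact Finset.sum_congr rfl fun i _ => by ring
  linarith

/-- duality for the generalized fused lasso. For a norm `N` on
`ℝᵐ` with dual norm `N*(v) = sup{vᵀz : N z ≤ 1}`, if `θ̂` minimizes
`(1/2)‖y - θ‖₂² + μ N(Bθ)` and `v̂` minimizes `‖y - Bᵀv‖₂²` over
`{v : N*(v) ≤ μ}`, then `θ̂ = y - Bᵀv̂`. -/
theorem generalized_fused_dual (n m : ℕ) (y : Fin n → ℝ)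
    (B : Matrix (Fin m) (Fin n) ℝ) (μ : ℝ) (hμ : 0 ≤ μ)
    (N : (Fin m → ℝ) → ℝ)
    (hN_smul : ∀ (a : ℝ) (x : Fin m → ℝ), N (a • x) = |a| * N x)
    (hN_add : ∀ x z : Fin m → ℝ, N (x + z) ≤ N x + N z)
    (hN_eq_zero : ∀ x : Fin m → ℝ, N x = 0 → x = 0)
    (Nstar : (Fin m → ℝ) → ℝ)
    (hNstar : Nstar = fun v => sSup ((fun z => ∑ a, v a * z a) '' {z | N z ≤ 1}))
    (θhat : Fin n → ℝ)
    (hθhat : ∀ θ : Fin n → ℝ,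
      (1/2) * ∑ i, (y i - θhat i)^2 + μ * N (B.mulVec θhat)
        ≤ (1/2) * ∑ i, (y i - θ i)^2 + μ * N (B.mulVec θ))
    (vhat : Fin m → ℝ) (hvhat_feas : Nstar vhat ≤ μ)
    (hvhat : ∀ v : Fin m → ℝ, Nstar v ≤ μ →
      (∑ i, (y i - (B.transpose.mulVec vhat) i)^2)
        ≤ ∑ i, (y i - (B.transpose.mulVec v) i)^2) :
    θhat = y - B.transpose.mulVec vhat := by
  let p : Seminorm ℝ (Fin m → ℝ) := .of N hN_add hN_smul
  have feasible_iff (v : Fin m → ℝ) : Nstar v ≤ μ ↔ ∀ z, v ⬝ᵥ z ≤ μ * N z := by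
    subst hNstar
    exact p.sSup_image_setOf_le_one_le_iff hN_eq_zero (dotProductEquiv ℝ _ v) hμ
  simp only [sum_sub_sq_eq_dotProduct] at hθhat hvhat
  rw [feasible_iff] at hvhat_feas
  have hslack := IsMinOn.dotProduct_mulVec_eq B y hμ p hvhat_feas
    fun v hv => hvhat v ((feasible_iff v).2 hv)
  have hcert := add_half_dotProduct_le_of_dual_certificate B hvhat_feas rfl hslack θhat
  have hopt := hθhat (y - Bᵀ *ᵥ vhat)
  have hdist : (θhat - (y - Bᵀ *ᵥ vhat)) ⬝ᵥ (θhat - (y - Bᵀ *ᵥ vhat)) ≤ 0 := by linarith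
  exact sub_eq_zero.1 <| dotProduct_self_eq_zero.1 <|
    hdist.antisymm (Finset.sum_nonneg fun i _ => mul_self_nonneg _)
end
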